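/- The constant C(d) = (16/Γ(d/2)) ∫₀^∞ e^{−ρ²} ρ^{d+1} / (2(d−2) + 4ρ²) dρ satisfies C(d) → 1 as d → ∞. -/

import Mathlib

open MeasureTheory Filter

/-- The blowup constant `C(d)`. -/
noncomputable def blowupC (d : ℕ) : ℝ :=
  (16 / Real.Gamma ((d : ℝ) / 2)) *
    ∫ ρ in Set.Ioi (0 : ℝ),
      Real.exp (-ρ ^ 2) * ρ ^ (d + 1) / (2 * ((d : ℝ) - 2) + 4 * ρ ^ 2)

/-!
Under the weight `exp (-ρ²) ρ^(d+1)` on `(0, ∞)`, the variable `t = ρ²` is Gamma distributed with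
shape `s = d/2 + 1`, so it has mean and variance `s`, and the prefactor `16 / Γ(d/2)` turns `C(d)`
into `4d · E[u⁻¹]` for `u = 2(d - 2) + 4t`, whose mean is `4d`. Below `u⁻¹` by its tangent at `4d`
(Jensen) and above it by that tangent plus `(u - 4d)² / ((4d)² · 2(d - 2))`, valid since
`u ≥ 2(d - 2)`; integrating gives `1 ≤ C(d) ≤ 1 + (d + 2) / (d (d - 2))`.
-/

open Set Real

theorem integrableOn_exp_neg_sq_mul_pow (m : ℕ) :
    IntegrableOn (fun ρ : ℝ => exp (-ρ ^ 2) * ρ ^ m) (Ioi 0) := by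
  refine (integrableOn_rpow_mul_exp_neg_mul_sq one_pos (s := m)
    (by linarith [m.cast_nonneg (α := ℝ)])).congr_fun (fun ρ _ => ?_) measurableSet_Ioi
  simp [mul_comm]

theorem integral_exp_neg_sq_mul_pow (m : ℕ) :
    ∫ ρ in Ioi 0, exp (-ρ ^ 2) * ρ ^ m = Gamma ((m + 1) / 2) / 2 := by
  have h := integral_rpow_mul_exp_neg_rpow two_pos (q := m) (by linarith [m.cast_nonneg (α := ℝ)])
  calc ∫ ρ in Ioi 0, exp (-ρ ^ 2) * ρ ^ m = ∫ ρ in Ioi 0, ρ ^ (m : ℝ) * exp (-ρ ^ (2 : ℝ)) := by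
        simp [mul_comm]
    _ = _ := by rw [h]; ring

theorem exp_neg_sq_mul_pow_mul_quadratic (m : ℕ) (α β γ s ρ : ℝ) :
    exp (-ρ ^ 2) * ρ ^ m * (α + β * (ρ ^ 2 - s) + γ * (ρ ^ 2 - s) ^ 2) =
      (α - β * s + γ * s ^ 2) * (exp (-ρ ^ 2) * ρ ^ m)
        + (β - 2 * γ * s) * (exp (-ρ ^ 2) * ρ ^ (m + 2)) + γ * (exp (-ρ ^ 2) * ρ ^ (m + 4)) := by
  ring

theorem integrableOn_exp_neg_sq_mul_pow_mul_quadratic (m : ℕ) (α β γ s : ℝ) :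
    IntegrableOn (fun ρ : ℝ => exp (-ρ ^ 2) * ρ ^ m * (α + β * (ρ ^ 2 - s) + γ * (ρ ^ 2 - s) ^ 2))
      (Ioi 0) := by
  simp_rw [exp_neg_sq_mul_pow_mul_quadratic]
  exact (((integrableOn_exp_neg_sq_mul_pow m).const_mul _).add
    ((integrableOn_exp_neg_sq_mul_pow (m + 2)).const_mul _)).add
    ((integrableOn_exp_neg_sq_mul_pow (m + 4)).const_mul _)

/-- Normalised, the weight makes `ρ²` have mean `s` and variance `s`. -/
theorem integral_exp_neg_sq_mul_pow_mul_quadratic (m : ℕ) (α β γ : ℝ) {s : ℝ}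
    (hs : s = (m + 1) / 2) :
    ∫ ρ in Ioi 0, exp (-ρ ^ 2) * ρ ^ m * (α + β * (ρ ^ 2 - s) + γ * (ρ ^ 2 - s) ^ 2) =
      Gamma s / 2 * (α + γ * s) := by
  have hs0 : 0 < s := by rw [hs]; positivity
  have hΓ1 : Gamma ((((m + 2 : ℕ) : ℝ) + 1) / 2) = s * Gamma s := by
    rw [← Gamma_add_one hs0.ne', hs]; push_cast; ring_nf
  have hΓ2 : Gamma ((((m + 4 : ℕ) : ℝ) + 1) / 2) = (s + 1) * (s * Gamma s) := by
    rw [← Gamma_add_one hs0.ne', ← Gamma_add_one (by positivity), hs]; push_cast; ring_nf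
  have hint (k : ℕ) (c : ℝ) := (integrableOn_exp_neg_sq_mul_pow k).const_mul c
  simp_rw [exp_neg_sq_mul_pow_mul_quadratic]
  rw [integral_add ?_ (hint _ _), integral_add (hint _ _) (hint _ _),
    integral_const_mul, integral_const_mul, integral_const_mul, integral_exp_neg_sq_mul_pow,
    integral_exp_neg_sq_mul_pow, integral_exp_neg_sq_mul_pow, hΓ1, hΓ2, ← hs]
  · ring
  · exact (hint _ _).add (hint _ _)

theorem inv_sub_div_sq_le_inv {u : ℝ} (hu : 0 < u) (b : ℝ) : b⁻¹ - (u - b) / b ^ 2 ≤ u⁻¹ := by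
  rcases eq_or_ne b 0 with rfl | hb
  · simpa using hu.le
  have h : u⁻¹ - (b⁻¹ - (u - b) / b ^ 2) = (u - b) ^ 2 / (u * b ^ 2) := by
    field_simp; ring
  exact sub_nonneg.1 (h ▸ by positivity)

theorem inv_le_inv_sub_div_sq_add {a u b : ℝ} (ha : 0 < a) (hau : a ≤ u) (hb : b ≠ 0) :
    u⁻¹ ≤ b⁻¹ - (u - b) / b ^ 2 + (u - b) ^ 2 / (b ^ 2 * a) := by
  have hu : 0 < u := ha.trans_le hau
  have h : b⁻¹ - (u - b) / b ^ 2 + (u - b) ^ 2 / (b ^ 2 * a) - u⁻¹ =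
      (u - b) ^ 2 * (u - a) / (u * b ^ 2 * a) := by
    field_simp; ring
  exact sub_nonneg.1 (h ▸ div_nonneg (mul_nonneg (sq_nonneg _) (sub_nonneg.2 hau)) (by positivity))

theorem integrableOn_exp_neg_sq_mul_pow_div (m : ℕ) {a c : ℝ} (ha : 0 < a) (hc : 0 ≤ c) :
    IntegrableOn (fun ρ : ℝ => exp (-ρ ^ 2) * ρ ^ m / (a + c * ρ ^ 2)) (Ioi 0) := by
  have hle (ρ : ℝ) : a ≤ a + c * ρ ^ 2 := le_add_of_nonneg_right (by positivity)
  simp_rw [div_eq_mul_inv]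
  refine (integrableOn_exp_neg_sq_mul_pow m).mul_bdd (c := a⁻¹) ?_ (ae_of_all _ fun ρ => ?_)
  · exact (Continuous.inv₀ (by fun_prop) fun ρ => (ha.trans_le (hle ρ)).ne').aestronglyMeasurable
  · rw [norm_inv, Real.norm_of_nonneg (ha.le.trans (hle ρ))]
    exact inv_anti₀ ha (hle ρ)

section Blowup

variable {d : ℕ}

theorem mul_integral_exp_neg_sq_mul_pow_succ_mul_quadratic (hd : d ≠ 0) (α β γ : ℝ) :
    16 / Gamma (d / 2) * ∫ ρ in Ioi 0, exp (-ρ ^ 2) * ρ ^ (d + 1) *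
      (α + β * (ρ ^ 2 - (d / 2 + 1)) + γ * (ρ ^ 2 - (d / 2 + 1)) ^ 2) =
        4 * d * (α + γ * (d / 2 + 1)) := by
  have hd' : (0 : ℝ) < d / 2 := by positivity
  rw [integral_exp_neg_sq_mul_pow_mul_quadratic (d + 1) α β γ (by push_cast; ring),
    Gamma_add_one hd'.ne']
  field_simp [(Gamma_pos_of_pos hd').ne']
  ring

theorem integrableOn_blowupC_integrand (hd : 3 ≤ d) :
    IntegrableOn (fun ρ : ℝ => exp (-ρ ^ 2) * ρ ^ (d + 1) / (2 * ((d : ℝ) - 2) + 4 * ρ ^ 2))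
      (Ioi 0) :=
  integrableOn_exp_neg_sq_mul_pow_div (d + 1)
    (by have : (3 : ℝ) ≤ d := (by exact_mod_cast hd); linarith) zero_le_four

theorem le_blowupC (hd : 3 ≤ d) {α β γ : ℝ}
    (h : ∀ ρ : ℝ, 0 < ρ → α + β * (ρ ^ 2 - (d / 2 + 1)) + γ * (ρ ^ 2 - (d / 2 + 1)) ^ 2 ≤
      (2 * ((d : ℝ) - 2) + 4 * ρ ^ 2)⁻¹) :
    4 * d * (α + γ * (d / 2 + 1)) ≤ blowupC d := by
  rw [← mul_integral_exp_neg_sq_mul_pow_succ_mul_quadratic (by omega) α β γ, blowupC]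
  refine mul_le_mul_of_nonneg_left (setIntegral_mono_on
    (integrableOn_exp_neg_sq_mul_pow_mul_quadratic _ _ _ _ _) (integrableOn_blowupC_integrand hd)
    measurableSet_Ioi fun ρ hρ => ?_)
    (div_nonneg (by norm_num) (Gamma_nonneg_of_nonneg (by positivity)))
  rw [div_eq_mul_inv]
  exact mul_le_mul_of_nonneg_left (h ρ hρ) (by have : 0 < ρ := hρ; positivity)

theorem blowupC_le (hd : 3 ≤ d) {α β γ : ℝ}
    (h : ∀ ρ : ℝ, 0 < ρ → (2 * ((d : ℝ) - 2) + 4 * ρ ^ 2)⁻¹ ≤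
      α + β * (ρ ^ 2 - (d / 2 + 1)) + γ * (ρ ^ 2 - (d / 2 + 1)) ^ 2) :
    blowupC d ≤ 4 * d * (α + γ * (d / 2 + 1)) := by
  rw [← mul_integral_exp_neg_sq_mul_pow_succ_mul_quadratic (by omega) α β γ, blowupC]
  refine mul_le_mul_of_nonneg_left (setIntegral_mono_on (integrableOn_blowupC_integrand hd)
    (integrableOn_exp_neg_sq_mul_pow_mul_quadratic _ _ _ _ _)
    measurableSet_Ioi fun ρ hρ => ?_)
    (div_nonneg (by norm_num) (Gamma_nonneg_of_nonneg (by positivity)))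
  rw [div_eq_mul_inv]
  exact mul_le_mul_of_nonneg_left (h ρ hρ) (by have : 0 < ρ := hρ; positivity)

theorem one_le_blowupC (hd : 3 ≤ d) : 1 ≤ blowupC d := by
  have hd3 : (3 : ℝ) ≤ d := by exact_mod_cast hd
  have hle := le_blowupC hd (α := (4 * d)⁻¹) (β := -4 / (4 * d) ^ 2) (γ := 0) fun ρ _ =>
    le_of_eq_of_le (by ring) (inv_sub_div_sq_le_inv (by nlinarith) (4 * d))
  rwa [zero_mul, add_zero, mul_inv_cancel₀ (by positivity)] at hle

theorem blowupC_le_one_add (hd : 3 ≤ d) : blowupC d ≤ 1 + 5 / d := by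
  have hd3 : (3 : ℝ) ≤ d := by exact_mod_cast hd
  have ha : (0 : ℝ) < 2 * (d - 2) := by linarith
  have hd0 : (d : ℝ) ≠ 0 := by positivity
  have hd2 : (d : ℝ) - 2 ≠ 0 := by linarith
  have hle := blowupC_le hd (α := (4 * d)⁻¹) (β := -4 / (4 * d) ^ 2)
    (γ := 16 / ((4 * d) ^ 2 * (2 * (d - 2)))) fun ρ _ =>
    le_of_le_of_eq (inv_le_inv_sub_div_sq_add (b := 4 * d) ha (by nlinarith) (by positivity))
      (by field_simp; ring)
  calc blowupC d ≤ _ := hle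
    _ = 1 + (d + 2) / (d * (d - 2)) := by field_simp; ring
    _ ≤ 1 + 5 / d := by
      rw [add_le_add_iff_left, div_le_div_iff₀ (by nlinarith) (by positivity)]
      nlinarith

end Blowup

/-- `C(d) → 1` as `d → ∞`. -/
theorem blowupC_tendsto_one :
    Tendsto (fun d : ℕ => blowupC d) atTop (nhds 1) := by
  have hupper : Tendsto (fun d : ℕ => 1 + 5 / (d : ℝ)) atTop (nhds 1) := by
    simpa using (tendsto_const_div_atTop_nhds_zero_nat 5).const_add (1 : ℝ)
  refine tendsto_of_tendsto_of_tendsto_of_le_of_le' tendsto_const_nhds hupper ?_ ?_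
  · filter_upwards [eventually_ge_atTop 3] with d hd using one_le_blowupC hd
  · filter_upwards [eventually_ge_atTop 3] with d hd using blowupC_le_one_add hd
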